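/- Swap lemma: Let v ∈ {a,b}^n, W = IBWT(v), and LCP = LCP_W. Suppose x is a string occurring in W such that (1) LCP[i_{xa}+1..j_{xa}) = LCP[i_{xb}+1..j_{xb}) as arrays, and (2) v[i_{xa}..j_{xa}) consists entirely of a's and v[i_{xb}..j_{xb}) consists entirely of b's, where [i_z..j_z) denotes the z-interval for z ∈ {xa, xb}. Let v' be obtained from v by setting v'[i_{xa}..j_{xa}) to all b's and v'[i_{xb}..j_{xb}) to all a's, leaving the rest unchanged. Then LCP_{IBWT(v')} = LCP. -/

import Mathlib

/-!
Write `Ψ = stdPerm v` and `v̂ = v ∘ Ψ`. The suffix of rank `r` is `v̂ r` followed by the suffix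
of rank `Ψ r`, and, since suffixes are sorted, the lcp of the suffixes of ranks `p ≤ q` is the
minimum of the LCP array over `(p, q]`.

Swapping the two blocks is a permutation `τ` of ranks with `v' ∘ τ = v` that keeps equal letters
in order, so `Ψ_{v'} = τ ∘ Ψ_v` and `v̂' = v̂`. The xa- and xb-intervals are the two halves of the
x-interval; a range of ranks that leaves the x-interval has minimum below `|x|`, while inside it
every LCP value is at least `|x|`, and on the two halves the LCP values coincide. Hence `τ`
preserves range minima between ranks carrying the same letter, and induction on the depth shows
that the suffixes of ranks `p ≤ q` agree to the same depth for `v` and for `v'`.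
-/

set_option linter.unusedSectionVars false

set_option linter.unusedSectionVars false

namespace SILA

variable {α : Type*} [LinearOrder α]

def lexLE (f g : ℕ → α) : Prop :=
  f = g ∨ ∃ k, (∀ m < k, f m = g m) ∧ f k < g k

noncomputable def lcpInf (f g : ℕ → α) : ℕ∞ :=
  sSup {m : ℕ∞ | ∀ k : ℕ, (k : ℕ∞) < m → f k = g k}

def IsPrefix (x : List α) (f : ℕ → α) : Prop :=
  ∀ m : Fin x.length, f m.val = x.get m

/-- The standard permutation of `v`: the stable-sort permutation. -/
noncomputable def stdPerm {n : ℕ} (v : Fin n → α) : Equiv.Perm (Fin n) := Tuple.sort v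

/-- The cyclic suffix of `IBWT v` corresponding to rank `r` of the suffix array
(Lemma: `W_{SA[r]} = v̂[r]·v̂[Ψ r]·v̂[Ψ² r]⋯` with `v̂ = v ∘ Ψ`). -/
noncomputable def ibwtSuffix {n : ℕ} (v : Fin n → α) (r : Fin n) : ℕ → α :=
  fun k => v ((stdPerm v ^ (k + 1)) r)

/-- The LCP array of the cyclic suffix array of `IBWT v`. -/
noncomputable def ibwtLCP {n : ℕ} (v : Fin n → α) (r : ℕ) : ℕ∞ :=
  if h : 0 < r ∧ r < n then
    lcpInf (ibwtSuffix v ⟨r - 1, by omega⟩) (ibwtSuffix v ⟨r, h.2⟩)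
  else 0

/-- `[i..j)` is the x-interval of the cyclic suffix array of `IBWT v`. -/
def IsXIntervalIBWT {n : ℕ} (v : Fin n → α) (x : List α) (i j : ℕ) : Prop :=
  i ≤ j ∧ j ≤ n ∧ ∀ r : Fin n, IsPrefix x (ibwtSuffix v r) ↔ (i ≤ r.val ∧ r.val < j)

section LcpInf

variable {f g h : ℕ → α}

theorem natCast_le_lcpInf_iff {k : ℕ} : (k : ℕ∞) ≤ lcpInf f g ↔ ∀ i < k, f i = g i := by
  refine ⟨fun hk i hi => ?_, fun hk => le_sSup fun i hi => hk i (by exact_mod_cast hi)⟩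
  obtain ⟨m, hm, him⟩ := lt_sSup_iff.mp ((Nat.cast_lt.mpr hi).trans_le hk)
  exact hm i him

theorem lcpInf_comm : lcpInf f g = lcpInf g f := by
  simp only [lcpInf, eq_comm]

theorem lcpInf_inf_lcpInf_le : lcpInf f g ⊓ lcpInf g h ≤ lcpInf f h := by
  refine ENat.forall_natCast_le_iff_le.mp fun k hk => ?_
  rw [le_inf_iff, natCast_le_lcpInf_iff, natCast_le_lcpInf_iff] at hk
  exact natCast_le_lcpInf_iff.mpr fun i hi => (hk.1 i hi).trans (hk.2 i hi)

theorem natCast_add_one_le_lcpInf_iff {k : ℕ} :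
    ((k + 1 : ℕ) : ℕ∞) ≤ lcpInf f g ↔
      f 0 = g 0 ∧ (k : ℕ∞) ≤ lcpInf (fun i => f (i + 1)) (fun i => g (i + 1)) := by
  simp only [natCast_le_lcpInf_iff, Nat.forall_lt_succ_left]

theorem IsPrefix.isPrefix_iff_length_le_lcpInf {x : List α} (hf : IsPrefix x f) :
    IsPrefix x g ↔ (x.length : ℕ∞) ≤ lcpInf f g := by
  rw [natCast_le_lcpInf_iff]
  exact ⟨fun hg i hi => (hf ⟨i, hi⟩).trans (hg ⟨i, hi⟩).symm,
    fun h m => (h m m.isLt).symm.trans (hf m)⟩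

theorem isPrefix_append_singleton_iff {x : List α} {c : α} :
    IsPrefix (x ++ [c]) f ↔ IsPrefix x f ∧ f x.length = c := by
  simp only [IsPrefix, Fin.forall_iff, List.get_eq_getElem, List.length_append,
    List.length_singleton, Nat.forall_lt_succ_right', List.getElem_concat_length]
  exact and_congr_left fun _ => forall₂_congr fun m hm => by rw [List.getElem_append_left hm]

end LcpInf

section Suffix

variable {n : ℕ} (w : Fin n → α)

theorem ibwtSuffix_zero (r : Fin n) : ibwtSuffix w r 0 = w (stdPerm w r) := by
  simp [ibwtSuffix]

theorem ibwtSuffix_succ (r : Fin n) (k : ℕ) :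
    ibwtSuffix w r (k + 1) = ibwtSuffix w (stdPerm w r) k := by
  simp only [ibwtSuffix, pow_succ, Equiv.Perm.mul_apply]

theorem monotone_comp_stdPerm : Monotone (w ∘ stdPerm w) := Tuple.monotone_sort w

theorem stdPerm_lt_stdPerm {p q : Fin n} (hpq : p < q) (h : w (stdPerm w p) = w (stdPerm w q)) :
    stdPerm w p < stdPerm w q :=
  (Tuple.eq_sort_iff.mp rfl).2 p q hpq h

theorem stdPerm_le_stdPerm {p q : Fin n} (hpq : p ≤ q) (h : w (stdPerm w p) = w (stdPerm w q)) :
    stdPerm w p ≤ stdPerm w q := by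
  rcases hpq.lt_or_eq with hpq | rfl
  exacts [(stdPerm_lt_stdPerm w hpq h).le, le_rfl]

theorem ibwtSuffix_apply_le_of_le {p q : Fin n} (hpq : p ≤ q) {j : ℕ}
    (h : ∀ i < j, ibwtSuffix w p i = ibwtSuffix w q i) :
    ibwtSuffix w p j ≤ ibwtSuffix w q j := by
  induction j generalizing p q with
  | zero => rw [ibwtSuffix_zero, ibwtSuffix_zero]; exact monotone_comp_stdPerm w hpq
  | succ j ih =>
    have h0 : w (stdPerm w p) = w (stdPerm w q) := by
      simpa only [ibwtSuffix_zero] using h 0 j.succ_pos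
    simp only [ibwtSuffix_succ] at h ⊢
    exact ih (stdPerm_le_stdPerm w hpq h0) fun i hi => h (i + 1) (by omega)

theorem ibwtSuffix_eq_of_le_of_le {p t q : Fin n} (hpt : p ≤ t) (htq : t ≤ q) {k : ℕ}
    (h : ∀ i < k, ibwtSuffix w p i = ibwtSuffix w q i) :
    ∀ i < k, ibwtSuffix w p i = ibwtSuffix w t i := by
  induction k with
  | zero => simp
  | succ k ih =>
    have hpt' := ih fun i hi => h i (by omega)
    have htq' : ∀ i < k, ibwtSuffix w t i = ibwtSuffix w q i :=
      fun i hi => (hpt' i hi).symm.trans (h i (by omega))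
    refine Nat.forall_lt_succ_right.mpr ⟨hpt', le_antisymm ?_ ?_⟩
    · exact ibwtSuffix_apply_le_of_le w hpt hpt'
    · exact (ibwtSuffix_apply_le_of_le w htq htq').trans_eq (h k k.lt_succ_self).symm

theorem lcpInf_ibwtSuffix_le_of_le_of_le {p t q : Fin n} (hpt : p ≤ t) (htq : t ≤ q) :
    lcpInf (ibwtSuffix w p) (ibwtSuffix w q) ≤ lcpInf (ibwtSuffix w p) (ibwtSuffix w t) :=
  ENat.forall_natCast_le_iff_le.mp fun _ hk => natCast_le_lcpInf_iff.mpr <|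
    ibwtSuffix_eq_of_le_of_le w hpt htq (natCast_le_lcpInf_iff.mp hk)

theorem ibwtLCP_eq_lcpInf {t : ℕ} (h0 : 0 < t) (ht : t < n) :
    ibwtLCP w t = lcpInf (ibwtSuffix w ⟨t - 1, by omega⟩) (ibwtSuffix w ⟨t, ht⟩) :=
  dif_pos ⟨h0, ht⟩

noncomputable def lcpRangeMin (a b : ℕ) : ℕ∞ := (Finset.Ioc a b).inf (ibwtLCP w)

theorem lcpRangeMin_eq_inf {a b c : ℕ} (hab : a ≤ b) (hbc : b ≤ c) :
    lcpRangeMin w a c = lcpRangeMin w a b ⊓ lcpRangeMin w b c := by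
  rw [lcpRangeMin, ← Finset.Ioc_union_Ioc_eq_Ioc hab hbc, Finset.inf_union]; rfl

theorem lcpRangeMin_add_of_ibwtLCP_add {i L : ℕ}
    (hlcp : ∀ t, 0 < t → t < L → ibwtLCP w (i + t) = ibwtLCP w (i + L + t)) {a b : ℕ}
    (ha : i ≤ a) (hb : b < i + L) : lcpRangeMin w (a + L) (b + L) = lcpRangeMin w a b := by
  rw [lcpRangeMin, ← Finset.map_add_right_Ioc, Finset.inf_map]
  refine Finset.inf_congr rfl fun t ht => ?_
  rw [Finset.mem_Ioc] at ht
  have ht' := hlcp (t - i) (by omega) (by omega)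
  rw [show i + (t - i) = t by omega, show i + L + (t - i) = t + L by omega] at ht'
  exact ht'.symm

theorem lcpRangeMin_le_lcpInf_ibwtSuffix (p : Fin n) (q : ℕ) (hpq : p ≤ q) (hq : q < n) :
    lcpRangeMin w p q ≤ lcpInf (ibwtSuffix w p) (ibwtSuffix w ⟨q, hq⟩) := by
  induction q, hpq using Nat.le_induction with
  | base => exact le_top.trans (le_sSup fun _ _ => rfl)
  | succ q hpq ih =>
    rw [lcpRangeMin, ← Finset.insert_Ioc_right_eq_Ioc_add_one hpq, Finset.inf_insert,
      ibwtLCP_eq_lcpInf w (by omega) hq]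
    calc _ ≤ lcpInf (ibwtSuffix w p) (ibwtSuffix w ⟨q, by omega⟩) ⊓
          lcpInf (ibwtSuffix w ⟨q, by omega⟩) (ibwtSuffix w ⟨q + 1, hq⟩) :=
          by rw [inf_comm]; exact inf_le_inf_right _ (ih (by omega))
      _ ≤ _ := lcpInf_inf_lcpInf_le

theorem lcpInf_ibwtSuffix_eq_lcpRangeMin {p q : Fin n} (hpq : p ≤ q) :
    lcpInf (ibwtSuffix w p) (ibwtSuffix w q) = lcpRangeMin w p q := by
  refine le_antisymm (Finset.le_inf fun t ht => ?_)
    (lcpRangeMin_le_lcpInf_ibwtSuffix w p q hpq q.isLt)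
  rw [Finset.mem_Ioc] at ht
  let s : Fin n := ⟨t - 1, by omega⟩
  let s' : Fin n := ⟨t, by omega⟩
  have hps : p ≤ s := Fin.le_def.mpr (show (p : ℕ) ≤ t - 1 by omega)
  have hsq : s ≤ q := Fin.le_def.mpr (show t - 1 ≤ (q : ℕ) by omega)
  have hps' : p ≤ s' := ht.1.le
  have hsq' : s' ≤ q := ht.2
  rw [ibwtLCP_eq_lcpInf w (by omega) (by omega)]
  calc _ ≤ lcpInf (ibwtSuffix w s) (ibwtSuffix w p) ⊓
        lcpInf (ibwtSuffix w p) (ibwtSuffix w s') := by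
        rw [lcpInf_comm (f := ibwtSuffix w s)]
        exact le_inf (lcpInf_ibwtSuffix_le_of_le_of_le w hps hsq)
          (lcpInf_ibwtSuffix_le_of_le_of_le w hps' hsq')
    _ ≤ _ := lcpInf_inf_lcpInf_le

end Suffix

section Transfer

variable {n : ℕ} {w w' : Fin n → α} (σ : Equiv.Perm (Fin n))

theorem stdPerm_eq_trans (hw : ∀ r, w' (σ r) = w r)
    (hσ : ∀ p q, p < q → w p = w q → σ p < σ q) :
    stdPerm w' = (stdPerm w).trans σ := by
  refine (Tuple.eq_sort_iff.mpr ⟨fun p q hpq => ?_, fun p q hpq h => ?_⟩).symm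
  · simpa only [Function.comp_apply, Equiv.trans_apply, hw] using monotone_comp_stdPerm w hpq
  · simp only [Equiv.trans_apply, hw] at h ⊢
    exact hσ _ _ (stdPerm_lt_stdPerm w hpq h) h

theorem ibwtLCP_eq_of_lcpRangeMin_eq (hw : ∀ r, w' (σ r) = w r)
    (hσ : ∀ p q, p < q → w p = w q → σ p < σ q)
    (hM : ∀ a b, a ≤ b → w a = w b → lcpRangeMin w (σ a) (σ b) = lcpRangeMin w a b) :
    ibwtLCP w' = ibwtLCP w := by
  have hΨ := stdPerm_eq_trans σ hw hσ
  have hhat : ∀ r, w' (stdPerm w' r) = w (stdPerm w r) := by simp [hΨ, hw]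
  suffices hdepth : ∀ (k : ℕ) (p q : Fin n), p ≤ q →
      ((k : ℕ∞) ≤ lcpInf (ibwtSuffix w' p) (ibwtSuffix w' q) ↔
        (k : ℕ∞) ≤ lcpInf (ibwtSuffix w p) (ibwtSuffix w q)) by
    funext r
    unfold ibwtLCP
    split_ifs with hr
    · exact ENat.eq_of_forall_natCast_le_iff fun k => hdepth k _ _ (Fin.mk_le_mk.mpr (by omega))
    · rfl
  intro k
  induction k with
  | zero => simp
  | succ k ih =>
    intro p q hpq
    simp only [natCast_add_one_le_lcpInf_iff, ibwtSuffix_zero, ibwtSuffix_succ, hhat]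
    refine and_congr_right fun h => ?_
    have hle := stdPerm_le_stdPerm w hpq h
    have hle' := stdPerm_le_stdPerm w' hpq (by rw [hhat, hhat, h])
    rw [ih _ _ hle', lcpInf_ibwtSuffix_eq_lcpRangeMin w hle',
      lcpInf_ibwtSuffix_eq_lcpRangeMin w hle,
      hΨ, Equiv.trans_apply, Equiv.trans_apply, hM _ _ hle h]

end Transfer

section Interval

variable {n : ℕ} {w : Fin n → α} {x : List α}

theorem lt_of_isPrefix_append_singleton {p q : Fin n} {c d : α}
    (hp : IsPrefix (x ++ [c]) (ibwtSuffix w p)) (hq : IsPrefix (x ++ [d]) (ibwtSuffix w q))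
    (hcd : c < d) : p < q := by
  rw [isPrefix_append_singleton_iff] at hp hq
  refine lt_of_not_ge fun hqp => hcd.not_ge ?_
  have h := ibwtSuffix_apply_le_of_le w hqp (j := x.length)
    fun i hi => (hq.1 ⟨i, hi⟩).trans (hp.1 ⟨i, hi⟩).symm
  rwa [hp.2, hq.2] at h

theorem isPrefix_ibwtSuffix_of_le_of_le {p t q : Fin n} (hpt : p ≤ t) (htq : t ≤ q)
    (hp : IsPrefix x (ibwtSuffix w p)) (hq : IsPrefix x (ibwtSuffix w q)) :
    IsPrefix x (ibwtSuffix w t) :=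
  hp.isPrefix_iff_length_le_lcpInf.mpr <|
    (hp.isPrefix_iff_length_le_lcpInf.mp hq).trans (lcpInf_ibwtSuffix_le_of_le_of_le w hpt htq)

namespace IsXIntervalIBWT

variable {i e : ℕ} (hx : IsXIntervalIBWT w x i e)
include hx

theorem lcpRangeMin_eq_of_lt_left {a c : Fin n} (ha : a < i) (hic : i ≤ c) (hce : c < e) :
    lcpRangeMin w a c = lcpRangeMin w a i := by
  let I : Fin n := ⟨i, by omega⟩
  have haI : a ≤ I := ha.le
  have hIc : I ≤ c := hic
  have hI : IsPrefix x (ibwtSuffix w I) := (hx.2.2 I).mpr ⟨le_rfl, show i < e by omega⟩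
  rw [lcpRangeMin_eq_inf w haI hIc, inf_eq_left]
  refine le_of_lt ?_
  rw [← lcpInf_ibwtSuffix_eq_lcpRangeMin w haI, ← lcpInf_ibwtSuffix_eq_lcpRangeMin w hIc,
    lcpInf_comm (f := ibwtSuffix w a)]
  calc lcpInf (ibwtSuffix w I) (ibwtSuffix w a) < x.length :=
        not_le.mp fun h => by have := (hx.2.2 a).mp (hI.isPrefix_iff_length_le_lcpInf.mpr h); omega
    _ ≤ _ := hI.isPrefix_iff_length_le_lcpInf.mp ((hx.2.2 c).mpr ⟨hic, hce⟩)

theorem lcpRangeMin_eq_of_le_right {c b : Fin n} (hic : i ≤ c) (hce : c < e) (hb : e ≤ b) :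
    lcpRangeMin w c b = lcpRangeMin w (e - 1) b := by
  let E : Fin n := ⟨e - 1, by omega⟩
  have hcE : c ≤ E := Fin.le_def.mpr (show (c : ℕ) ≤ e - 1 by omega)
  have hEb : E ≤ b := Fin.le_def.mpr (show e - 1 ≤ (b : ℕ) by omega)
  have hE : IsPrefix x (ibwtSuffix w E) :=
    (hx.2.2 E).mpr ⟨show i ≤ e - 1 by omega, show e - 1 < e by omega⟩
  rw [lcpRangeMin_eq_inf w hcE hEb, inf_eq_right]
  refine le_of_lt ?_
  rw [← lcpInf_ibwtSuffix_eq_lcpRangeMin w hEb, ← lcpInf_ibwtSuffix_eq_lcpRangeMin w hcE,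
    lcpInf_comm (f := ibwtSuffix w c)]
  calc lcpInf (ibwtSuffix w E) (ibwtSuffix w b) < x.length :=
        not_le.mp fun h => by have := (hx.2.2 b).mp (hE.isPrefix_iff_length_le_lcpInf.mpr h); omega
    _ ≤ _ := hE.isPrefix_iff_length_le_lcpInf.mp ((hx.2.2 c).mpr ⟨hic, hce⟩)

end IsXIntervalIBWT

end Interval

section Binary

variable {n : ℕ} {v : Fin n → Bool} {x : List Bool}

theorem isPrefix_iff_append_false_or_true {f : ℕ → Bool} :
    IsPrefix x f ↔ IsPrefix (x ++ [false]) f ∨ IsPrefix (x ++ [true]) f := by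
  rw [isPrefix_append_singleton_iff, isPrefix_append_singleton_iff, ← and_or_left]
  cases f x.length <;> simp

namespace IsXIntervalIBWT

variable {i j i' j' : ℕ} (ha : IsXIntervalIBWT v (x ++ [false]) i j)
  (hb : IsXIntervalIBWT v (x ++ [true]) i' j')
include ha hb

theorem right_eq_left_of_append_false_true (hij : i < j) (hij' : i' < j') : j = i' := by
  obtain ⟨-, hjn, ha⟩ := ha
  obtain ⟨-, hjn', hb⟩ := hb
  let p : Fin n := ⟨j - 1, by omega⟩
  let q : Fin n := ⟨i', by omega⟩
  have hp := (ha p).mpr ⟨show i ≤ j - 1 by omega, show j - 1 < j by omega⟩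
  have hq := (hb q).mpr ⟨le_rfl, hij'⟩
  have hpq : j - 1 < i' := lt_of_isPrefix_append_singleton hp hq Bool.false_lt_true
  by_contra hne
  let t : Fin n := ⟨j, by omega⟩
  have ht := isPrefix_ibwtSuffix_of_le_of_le
    (show p ≤ t from Fin.le_def.mpr (show j - 1 ≤ j by omega))
    (show t ≤ q from Fin.le_def.mpr (show j ≤ i' by omega))
    (isPrefix_append_singleton_iff.mp hp).1 (isPrefix_append_singleton_iff.mp hq).1
  rcases isPrefix_iff_append_false_or_true.mp ht with h | h
  · exact lt_irrefl j ((ha t).mp h).2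
  · exact hne (le_antisymm (by omega) ((hb t).mp h).1)

theorem append_false_true (h : j = i') : IsXIntervalIBWT v x i j' := by
  obtain ⟨hij, -, ha⟩ := ha
  obtain ⟨hij', hjn', hb⟩ := hb
  refine ⟨by omega, hjn', fun r => ?_⟩
  rw [isPrefix_iff_append_false_or_true, ha, hb]
  omega

end IsXIntervalIBWT

end Binary

section BlockSwap

variable {n : ℕ} (i L : ℕ) (h : i + L + L ≤ n)

def blockSwap : Equiv.Perm (Fin n) :=
  Function.Involutive.toPerm
    (fun r => ⟨if i ≤ r ∧ r < i + L then r + L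
      else if i + L ≤ r ∧ r < i + L + L then r - L else r, by split_ifs <;> omega⟩)
    (fun r => Fin.ext (by dsimp only; split_ifs <;> omega))

variable {i L h} {r : Fin n}

theorem blockSwap_val_of_lt (h₁ : i ≤ r) (h₂ : r < i + L) :
    (blockSwap i L h r : ℕ) = r + L :=
  if_pos ⟨h₁, h₂⟩

theorem blockSwap_val_of_ge (h₁ : i + L ≤ r) (h₂ : r < i + L + L) :
    (blockSwap i L h r : ℕ) = r - L :=
  (if_neg (by omega)).trans (if_pos ⟨h₁, h₂⟩)

theorem blockSwap_apply_of_not_mem (hr : ¬(i ≤ r ∧ r < i + L + L)) : blockSwap i L h r = r :=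
  Fin.ext ((if_neg (by omega)).trans (if_neg (by omega)))

theorem blockSwap_val_mem_iff :
    i ≤ (blockSwap i L h r : ℕ) ∧ (blockSwap i L h r : ℕ) < i + L + L ↔
      i ≤ r ∧ r < i + L + L := by
  change i ≤ ite _ _ _ ∧ ite _ _ _ < _ ↔ _
  split_ifs <;> omega

variable {v v' : Fin n → Bool} (hva : ∀ r : Fin n, i ≤ r → r < i + L → v r = false)
  (hvb : ∀ r : Fin n, i + L ≤ r → r < i + L + L → v r = true)
include hva hvb

theorem apply_blockSwap (hv' : ∀ r : Fin n, v' r =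
      if i ≤ r ∧ r < i + L then true else if i + L ≤ r ∧ r < i + L + L then false else v r)
    (r : Fin n) : v' (blockSwap i L h r) = v r := by
  rw [hv']
  by_cases hA : i ≤ r ∧ r < i + L
  · rw [blockSwap_val_of_lt hA.1 hA.2, if_neg (by omega), if_pos (by omega), hva r hA.1 hA.2]
  by_cases hB : i + L ≤ r ∧ r < i + L + L
  · rw [blockSwap_val_of_ge hB.1 hB.2, if_pos (by omega), hvb r hB.1 hB.2]
  rw [blockSwap_apply_of_not_mem (by omega), if_neg hA, if_neg hB]

theorem blockSwap_lt_blockSwap {p q : Fin n} (hpq : p < q) (hv : v p = v q) :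
    blockSwap i L h p < blockSwap i L h q := by
  rw [Fin.lt_def] at hpq ⊢
  change ite _ _ _ < ite _ _ _
  cases hvp : v p
  · have hp : ¬(i + L ≤ p ∧ p < i + L + L) := fun hB => by simp [hvb p hB.1 hB.2] at hvp
    have hq : ¬(i + L ≤ q ∧ q < i + L + L) := fun hB => by simp [hvb q hB.1 hB.2, hvp] at hv
    split_ifs <;> omega
  · have hp : ¬(i ≤ p ∧ p < i + L) := fun hA => by simp [hva p hA.1 hA.2] at hvp
    have hq : ¬(i ≤ q ∧ q < i + L) := fun hA => by simp [hva q hA.1 hA.2, hvp] at hv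
    split_ifs <;> omega

theorem lcpRangeMin_blockSwap {x : List Bool} (hx : IsXIntervalIBWT v x i (i + L + L))
    (hlcp : ∀ t, 0 < t → t < L → ibwtLCP v (i + t) = ibwtLCP v (i + L + t))
    {a b : Fin n} (hab : a ≤ b) (hv : v a = v b) :
    lcpRangeMin v (blockSwap i L h a) (blockSwap i L h b) = lcpRangeMin v a b := by
  rw [Fin.le_def] at hab
  by_cases ha : i ≤ a ∧ a < i + L + L <;> by_cases hb : i ≤ b ∧ b < i + L + L
  · rcases lt_or_ge (a : ℕ) (i + L) with ha' | ha' <;>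
      rcases lt_or_ge (b : ℕ) (i + L) with hb' | hb'
    · rw [blockSwap_val_of_lt ha.1 ha', blockSwap_val_of_lt hb.1 hb']
      exact lcpRangeMin_add_of_ibwtLCP_add v hlcp ha.1 hb'
    · simp [hva a ha.1 ha', hvb b hb' hb.2] at hv
    · omega
    · rw [blockSwap_val_of_ge ha' ha.2, blockSwap_val_of_ge hb' hb.2]
      have hshift := lcpRangeMin_add_of_ibwtLCP_add v hlcp (a := a - L) (b := b - L)
        (by omega) (by omega)
      rw [Nat.sub_add_cancel (by omega), Nat.sub_add_cancel (by omega)] at hshift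
      exact hshift.symm
  · have hτa := blockSwap_val_mem_iff (h := h) |>.mpr ha
    rw [blockSwap_apply_of_not_mem hb, hx.lcpRangeMin_eq_of_le_right ha.1 ha.2 (by omega),
      hx.lcpRangeMin_eq_of_le_right hτa.1 hτa.2 (by omega)]
  · have hτb := blockSwap_val_mem_iff (h := h) |>.mpr hb
    rw [blockSwap_apply_of_not_mem ha, hx.lcpRangeMin_eq_of_lt_left (by omega) hb.1 hb.2,
      hx.lcpRangeMin_eq_of_lt_left (by omega) hτb.1 hτb.2]
  · rw [blockSwap_apply_of_not_mem ha, blockSwap_apply_of_not_mem hb]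

end BlockSwap

theorem swap_lemma_general {n : ℕ} (v v' : Fin n → Bool) (x : List Bool)
    (ixa jxa ixb jxb : ℕ)
    (hxa : IsXIntervalIBWT v (x ++ [false]) ixa jxa)
    (hxb : IsXIntervalIBWT v (x ++ [true]) ixb jxb)
    (hlen : jxa - ixa = jxb - ixb)
    (hlcp : ∀ t : ℕ, 0 < t → t < jxa - ixa →
      ibwtLCP v (ixa + t) = ibwtLCP v (ixb + t))
    (hva : ∀ r : Fin n, ixa ≤ r.val → r.val < jxa → v r = false)
    (hvb : ∀ r : Fin n, ixb ≤ r.val → r.val < jxb → v r = true)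
    (hv' : ∀ r : Fin n, v' r =
      if ixa ≤ r.val ∧ r.val < jxa then true
      else if ixb ≤ r.val ∧ r.val < jxb then false
      else v r) :
    ∀ r : ℕ, ibwtLCP v' r = ibwtLCP v r := by
  rcases Nat.eq_zero_or_pos (jxa - ixa) with hL | hL
  · obtain rfl : v' = v := funext fun r => by rw [hv' r, if_neg (by omega), if_neg (by omega)]
    exact fun _ => rfl
  obtain rfl := hxa.right_eq_left_of_append_false_true hxb (by omega) (by omega)
  obtain ⟨L, rfl⟩ : ∃ L, jxa = ixa + L := ⟨jxa - ixa, by omega⟩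
  obtain rfl : jxb = ixa + L + L := by omega
  have hx := hxa.append_false_true hxb rfl
  simp only [Nat.add_sub_cancel_left] at hlcp
  exact congrFun (ibwtLCP_eq_of_lcpRangeMin_eq (blockSwap ixa L hx.2.1)
    (apply_blockSwap hva hvb hv') (fun _ _ => blockSwap_lt_blockSwap hva hvb)
    (fun _ _ => lcpRangeMin_blockSwap hva hvb hx hlcp))

/-- **Swap lemma.** Let `v ∈ {a,b}ⁿ` (`a = false < b = true`) and
`LCP = LCP_{IBWT(v)}`. If `x` occurs in `IBWT(v)`, the LCP arrays on the
xa-interval and the xb-interval agree, `v` is all a's on the xa-interval and all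
b's on the xb-interval, then the string `v'` obtained by swapping these two blocks
satisfies `LCP_{IBWT(v')} = LCP_{IBWT(v)}`. -/
theorem swap_lemma {n : ℕ} (v v' : Fin n → Bool) (x : List Bool)
    (ixa jxa ixb jxb : ℕ)
    (hocc : ∃ r : Fin n, IsPrefix x (ibwtSuffix v r))
    (hxa : IsXIntervalIBWT v (x ++ [false]) ixa jxa)
    (hxb : IsXIntervalIBWT v (x ++ [true]) ixb jxb)
    (hlen : jxa - ixa = jxb - ixb)
    (hlcp : ∀ t : ℕ, 0 < t → t < jxa - ixa →
      ibwtLCP v (ixa + t) = ibwtLCP v (ixb + t))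
    (hva : ∀ r : Fin n, ixa ≤ r.val → r.val < jxa → v r = false)
    (hvb : ∀ r : Fin n, ixb ≤ r.val → r.val < jxb → v r = true)
    (hv' : ∀ r : Fin n, v' r =
      if ixa ≤ r.val ∧ r.val < jxa then true
      else if ixb ≤ r.val ∧ r.val < jxb then false
      else v r) :
    ∀ r : ℕ, ibwtLCP v' r = ibwtLCP v r :=
  swap_lemma_general v v' x ixa jxa ixb jxb hxa hxb hlen hlcp hva hvb hv'

end SILA
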